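/- arXiv:math/0201040 — 4 statements merged into one kernel-verified Lean document; each statement's English description precedes it below -/
import Mathlib

section
/- Let n ≥ 1, let X be a domain (nonempty open connected set) in ℂⁿ and let z ∈ X. Let Q \ P_z denote the subspace of ℙⁿ(ℂ) × X consisting of pairs ([ξ], x) such that ξ·x = 0 and ξ·z ≠ 0, where for ξ = (ξ₀,…,ξₙ) ∈ ℂ^{n+1}\{0} and w ∈ ℂⁿ we write ξ·w = ξ₀ + ξ₁w₁ + … + ξₙwₙ. Then the restriction to Q \ P_z of the projection ℙⁿ(ℂ) × X → X is a continuous map onto X \ {z} which is a homotopy equivalence. -/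
open LinearAlgebra.Projectivization Projectivization

/-- Quotient topology on the projectivization of a topological vector space. -/
noncomputable instance projectivizationTopology {K V : Type*} [DivisionRing K] [AddCommGroup V]
    [Module K V] [TopologicalSpace V] : TopologicalSpace (ℙ K V) :=
  inferInstanceAs (TopologicalSpace (Quotient (projectivizationSetoid K V)))

/-- `ξ·w = ξ₀ + ξ₁w₁ + ⋯ + ξₙwₙ` for `ξ ∈ ℂ^{n+1}` and `w ∈ ℂⁿ`. -/
noncomputable def lerayDot {n : ℕ} (ξ : Fin (n + 1) → ℂ) (w : Fin n → ℂ) : ℂ :=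
  ξ 0 + ∑ i : Fin n, ξ i.succ * w i

/-!
Over a point `x ≠ z` the fibre of the projection consists of the hyperplanes through `x` that miss
`z`. Normalizing `ξ·z = 1` identifies it with the affine subspace `{ξ | ξ·z = 1, ξ·x = 0}` of
`ℂ^{n+1}`, which is convex and depends continuously on `x`. The hyperplane through `x`
Hermitian-orthogonal to `x - z` is a continuous section, and the straight-line homotopy in these
normalized coordinates deforms the identity into section ∘ projection, fibre by fibre.
-/

namespace Projectivization

section Algebra

variable {K V : Type*} [Field K] [AddCommGroup V] [Module K V]

theorem map_rep_mk_eq_zero_iff {W : Type*} [AddCommGroup W] [Module K W] (f : V →ₗ[K] W)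
    {v : V} (hv : v ≠ 0) : f (mk K v hv).rep = 0 ↔ f v = 0 := by
  obtain ⟨a, ha⟩ := exists_smul_eq_mk_rep K v hv
  rw [← ha, Units.smul_def, map_smul, smul_eq_zero_iff_right a.ne_zero]

theorem inv_smul_rep_mk (φ : V →ₗ[K] K) {v : V} (hv : v ≠ 0) :
    (φ (mk K v hv).rep)⁻¹ • (mk K v hv).rep = (φ v)⁻¹ • v := by
  obtain ⟨a, ha⟩ := exists_smul_eq_mk_rep K v hv
  rw [← ha, Units.smul_def, map_smul, smul_smul, smul_eq_mul, mul_inv_rev,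
    inv_mul_cancel_right₀ a.ne_zero]

end Algebra

section Topology

variable {K V : Type*} [Field K] [AddCommGroup V] [Module K V] [TopologicalSpace V]

theorem isQuotientMap_mk' : Topology.IsQuotientMap (mk' K : {v : V // v ≠ 0} → ℙ K V) :=
  isQuotientMap_quotient_mk'

theorem continuous_mk' : Continuous (mk' K : {v : V // v ≠ 0} → ℙ K V) :=
  isQuotientMap_mk'.continuous

variable [TopologicalSpace K]

theorem isOpen_setOf_map_rep_ne_zero [T1Space K] (φ : V →L[K] K) :
    IsOpen {p : ℙ K V | φ p.rep ≠ 0} := by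
  rw [← isQuotientMap_mk'.isOpen_preimage]
  convert (isOpen_compl_singleton (x := (0 : K))).preimage
    (φ.continuous.comp continuous_subtype_val)
  ext v
  exact (map_rep_mk_eq_zero_iff (φ : V →ₗ[K] K) v.2).not

theorem continuousOn_inv_smul_rep [T1Space K] [ContinuousInv₀ K] [ContinuousSMul K V]
    (φ : V →L[K] K) :
    ContinuousOn (fun p : ℙ K V => (φ p.rep)⁻¹ • p.rep) {p | φ p.rep ≠ 0} := by
  rw [isQuotientMap_mk'.continuousOn_isOpen_iff (isOpen_setOf_map_rep_ne_zero φ)]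
  have hφ : Continuous fun v : {v : V // v ≠ 0} => φ v := φ.continuous.comp continuous_subtype_val
  refine ((hφ.continuousOn.inv₀ fun v hv => ?_).smul continuous_subtype_val.continuousOn).congr
    fun v _ => inv_smul_rep_mk (φ : V →ₗ[K] K) v.2
  exact (map_rep_mk_eq_zero_iff (φ : V →ₗ[K] K) v.2).not.1 hv

end Topology

end Projectivization

section Leray

variable {n : ℕ}

noncomputable def lerayForm (w : Fin n → ℂ) : (Fin (n + 1) → ℂ) →L[ℂ] ℂ :=
  ContinuousLinearMap.proj 0 + ∑ i, w i • ContinuousLinearMap.proj i.succ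

@[simp]
theorem lerayForm_apply (w : Fin n → ℂ) (ξ : Fin (n + 1) → ℂ) :
    lerayForm w ξ = lerayDot ξ w := by
  simp [lerayForm, lerayDot, mul_comm]

theorem ne_zero_of_lerayDot_ne_zero {ξ : Fin (n + 1) → ℂ} {w : Fin n → ℂ}
    (h : lerayDot ξ w ≠ 0) : ξ ≠ 0 := by
  rintro rfl
  simp [lerayDot] at h

theorem continuous_lerayDot_left (w : Fin n → ℂ) :
    Continuous fun ξ : Fin (n + 1) → ℂ => lerayDot ξ w := by
  unfold lerayDot
  fun_prop

theorem lerayDot_smul (c : ℂ) (ξ : Fin (n + 1) → ℂ) (w : Fin n → ℂ) :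
    lerayDot (c • ξ) w = c * lerayDot ξ w := by
  simp only [← lerayForm_apply, map_smul, smul_eq_mul]

theorem lerayDot_lineMap (ξ η : Fin (n + 1) → ℂ) (w : Fin n → ℂ) (t : ℂ) :
    lerayDot (AffineMap.lineMap ξ η t) w = AffineMap.lineMap (lerayDot ξ w) (lerayDot η w) t := by
  simp only [← lerayForm_apply]
  exact (lerayForm w).toLinearMap.toAffineMap.apply_lineMap ξ η t

noncomputable def lerayNormal (z x : Fin n → ℂ) : Fin (n + 1) → ℂ :=
  Fin.cons (-∑ i, star (x i - z i) * x i) fun i => star (x i - z i)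

theorem lerayDot_lerayNormal (z x w : Fin n → ℂ) :
    lerayDot (lerayNormal z x) w = ∑ i, star (x i - z i) * (w i - x i) := by
  simp only [lerayDot, lerayNormal, Fin.cons_zero, Fin.cons_succ, mul_sub, Finset.sum_sub_distrib]
  ring

theorem lerayDot_lerayNormal_self (z x : Fin n → ℂ) : lerayDot (lerayNormal z x) x = 0 := by
  simp [lerayDot_lerayNormal]

theorem lerayDot_lerayNormal_ne_zero {z x : Fin n → ℂ} (hx : x ≠ z) :
    lerayDot (lerayNormal z x) z ≠ 0 := by
  have hsum : lerayDot (lerayNormal z x) z = -((∑ i, ‖x i - z i‖ ^ 2 : ℝ) : ℂ) := by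
    simp only [lerayDot_lerayNormal, Complex.ofReal_sum, ← Finset.sum_neg_distrib]
    refine Finset.sum_congr rfl fun i _ => ?_
    rw [← neg_sub (x i), mul_neg, Complex.ofReal_pow, ← Complex.conj_mul']
    rfl
  rw [hsum, neg_ne_zero, Complex.ofReal_ne_zero]
  refine fun h => hx (funext fun i => sub_eq_zero.1 ?_)
  simpa using (Finset.sum_eq_zero_iff_of_nonneg fun i _ => by positivity).1 h i (Finset.mem_univ i)

theorem continuous_lerayNormal (z : Fin n → ℂ) : Continuous (lerayNormal z) := by
  refine continuous_pi fun i => Fin.cases ?_ (fun j => ?_) i <;>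
    simp only [lerayNormal, Fin.cons_zero, Fin.cons_succ] <;> fun_prop

end Leray

section LerayIncidence

variable {n : ℕ} (X : Set (Fin n → ℂ)) (z : Fin n → ℂ)

/-- The space `Q \ P_z`. -/
def lerayIncidence : Set (ℙ ℂ (Fin (n + 1) → ℂ) × (Fin n → ℂ)) :=
  {p | p.2 ∈ X ∧ lerayDot p.1.rep p.2 = 0 ∧ lerayDot p.1.rep z ≠ 0}

variable {X z}

theorem mk_mem_lerayIncidence {v : Fin (n + 1) → ℂ} (hv : v ≠ 0) {x : Fin n → ℂ} (hx : x ∈ X)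
    (hvx : lerayDot v x = 0) (hvz : lerayDot v z ≠ 0) : (mk ℂ v hv, x) ∈ lerayIncidence X z := by
  simp only [lerayIncidence, Set.mem_ofPred_eq, ← lerayForm_apply]
  exact ⟨hx, (map_rep_mk_eq_zero_iff _ hv).2 (by simpa using hvx),
    (map_rep_mk_eq_zero_iff _ hv).not.2 (by simpa using hvz)⟩

theorem snd_ne_of_mem_lerayIncidence {p : ℙ ℂ (Fin (n + 1) → ℂ) × (Fin n → ℂ)}
    (hp : p ∈ lerayIncidence X z) : p.2 ≠ z := by
  intro h
  exact hp.2.2 (h ▸ hp.2.1)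

variable (X z)

def lerayProjection : C(lerayIncidence X z, ↥(X \ {z})) where
  toFun q := ⟨q.1.2, q.2.1, snd_ne_of_mem_lerayIncidence q.2⟩
  continuous_toFun := by fun_prop

noncomputable def leraySection : C(↥(X \ {z}), lerayIncidence X z) where
  toFun x := ⟨(mk ℂ (lerayNormal z x)
      (ne_zero_of_lerayDot_ne_zero (lerayDot_lerayNormal_ne_zero x.2.2)), x),
    mk_mem_lerayIncidence _ x.2.1 (lerayDot_lerayNormal_self z x)
      (lerayDot_lerayNormal_ne_zero x.2.2)⟩
  continuous_toFun := by
    have hnormal := (continuous_lerayNormal z).comp (continuous_subtype_val (p := (· ∈ X \ {z})))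
    exact ((continuous_mk'.comp (hnormal.subtype_mk _)).prodMk continuous_subtype_val).subtype_mk _

theorem lerayProjection_comp_leraySection :
    (lerayProjection X z).comp (leraySection X z) = ContinuousMap.id _ :=
  rfl

noncomputable def lerayHomotopyVec (t : ℂ) (p : ℙ ℂ (Fin (n + 1) → ℂ) × (Fin n → ℂ)) :
    Fin (n + 1) → ℂ :=
  AffineMap.lineMap ((lerayDot p.1.rep z)⁻¹ • p.1.rep)
    ((lerayDot (lerayNormal z p.2) z)⁻¹ • lerayNormal z p.2) t

variable {X z} in
theorem lerayDot_lerayHomotopyVec {p : ℙ ℂ (Fin (n + 1) → ℂ) × (Fin n → ℂ)}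
    (hp : p ∈ lerayIncidence X z) (t : ℂ) :
    lerayDot (lerayHomotopyVec z t p) p.2 = 0 ∧ lerayDot (lerayHomotopyVec z t p) z = 1 := by
  have hx := lerayDot_lerayNormal_ne_zero (snd_ne_of_mem_lerayIncidence hp)
  simp only [lerayHomotopyVec, lerayDot_lineMap, lerayDot_smul, hp.2.1, lerayDot_lerayNormal_self,
    mul_zero, inv_mul_cancel₀ hp.2.2, inv_mul_cancel₀ hx, AffineMap.lineMap_same_apply, and_self]

theorem continuous_lerayHomotopyVec :
    Continuous fun tq : unitInterval × lerayIncidence X z =>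
      lerayHomotopyVec z (tq.1 : ℝ) tq.2 := by
  have hchart := continuousOn_inv_smul_rep (lerayForm z)
  simp only [lerayForm_apply] at hchart
  have hsec : ContinuousOn (fun x => (lerayDot (lerayNormal z x) z)⁻¹ • lerayNormal z x)
      {x | x ≠ z} :=
    (((continuous_lerayDot_left z).comp (continuous_lerayNormal z)).continuousOn.inv₀
      fun _ hx => lerayDot_lerayNormal_ne_zero hx).smul (continuous_lerayNormal z).continuousOn
  refine Continuous.lineMap ?_ ?_ (by fun_prop)
  · exact hchart.comp_continuous (by fun_prop) fun tq => tq.2.2.2.2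
  · exact hsec.comp_continuous (by fun_prop) fun tq => snd_ne_of_mem_lerayIncidence tq.2.2

noncomputable def lerayHomotopy :
    (ContinuousMap.id (lerayIncidence X z)).Homotopy
      ((leraySection X z).comp (lerayProjection X z)) where
  toFun tq := ⟨(mk ℂ (lerayHomotopyVec z (tq.1 : ℝ) tq.2) (ne_zero_of_lerayDot_ne_zero
      ((lerayDot_lerayHomotopyVec tq.2.2 tq.1).2 ▸ one_ne_zero)), tq.2.1.2),
    mk_mem_lerayIncidence _ tq.2.2.1 (lerayDot_lerayHomotopyVec tq.2.2 tq.1).1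
      ((lerayDot_lerayHomotopyVec tq.2.2 tq.1).2 ▸ one_ne_zero)⟩
  continuous_toFun :=
    ((continuous_mk'.comp ((continuous_lerayHomotopyVec X z).subtype_mk _)).prodMk
      (by fun_prop)).subtype_mk _
  map_zero_left q := by
    refine Subtype.ext (Prod.ext ?_ rfl)
    change mk ℂ _ _ = q.1.1
    refine ((mk_eq_mk_iff' ℂ _ q.1.1.rep _ q.1.1.rep_nonzero).2
      ⟨(lerayDot q.1.1.rep z)⁻¹, ?_⟩).trans (mk_rep _)
    simp [lerayHomotopyVec]
  map_one_left q := by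
    refine Subtype.ext (Prod.ext ?_ rfl)
    change mk ℂ _ _ = mk ℂ (lerayNormal z q.1.2) _
    refine (mk_eq_mk_iff' ℂ _ _ _ _).2 ⟨(lerayDot (lerayNormal z q.1.2) z)⁻¹, ?_⟩
    simp [lerayHomotopyVec]

end LerayIncidence

theorem leray_projection_homotopy_equiv_general (n : ℕ) (X : Set (Fin n → ℂ)) (z : Fin n → ℂ) :
    ∃ e : ContinuousMap.HomotopyEquiv
        (↥{p : ℙ ℂ (Fin (n + 1) → ℂ) × (Fin n → ℂ) |
            p.2 ∈ X ∧ lerayDot p.1.rep p.2 = 0 ∧ lerayDot p.1.rep z ≠ 0})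
        (↥(X \ {z})),
      Function.Surjective ⇑e ∧ ∀ w, ((e w : Fin n → ℂ)) = w.1.2 :=
  ⟨{ toFun := lerayProjection X z
     invFun := leraySection X z
     left_inv := ⟨(lerayHomotopy X z).symm⟩
     right_inv := lerayProjection_comp_leraySection X z ▸ .refl _ },
    fun x => ⟨leraySection X z x, rfl⟩, fun _ => rfl⟩

/-- The projection `Q \ P_z → X \ {z}` is a (continuous, surjective) homotopy equivalence. -/
theorem leray_projection_homotopy_equiv (n : ℕ) (hn : 1 ≤ n) (X : Set (Fin n → ℂ))
    (hXopen : IsOpen X) (hXconn : IsConnected X) (z : Fin n → ℂ) (hz : z ∈ X) :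
    ∃ e : ContinuousMap.HomotopyEquiv
        (↥{p : ℙ ℂ (Fin (n + 1) → ℂ) × (Fin n → ℂ) |
            p.2 ∈ X ∧ lerayDot p.1.rep p.2 = 0 ∧ lerayDot p.1.rep z ≠ 0})
        (↥(X \ {z})),
      Function.Surjective ⇑e ∧ ∀ w, ((e w : Fin n → ℂ)) = w.1.2 :=
  leray_projection_homotopy_equiv_general n X z
end

section
/- Let T be the set of points ([ξ₁:ξ₂], (x₁, x₂)) ∈ ℙ¹(ℂ) × ℂ² such that ξ₁³(x₁ − 1) + ξ₂³(x₂ − 2) + 2ξ₁²ξ₂ = 0. Then the inclusion map T ↪ ℙ¹(ℂ) × ℂ² is a homotopy equivalence. -/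
open LinearAlgebra.Projectivization Projectivization

/-- Example C (modified): `T = {([ξ₁:ξ₂],(x₁,x₂)) : ξ₁³(x₁−1) + ξ₂³(x₂−2) + 2ξ₁²ξ₂ = 0}`,
as a subset of `ℙ¹(ℂ) × ℂ²` (coordinates `ξ₁ = ξ 0`, `ξ₂ = ξ 1`). -/
noncomputable def exampleC_T : Set (ℙ ℂ (Fin 2 → ℂ) × (ℂ × ℂ)) :=
  {p | p.1.rep 0 ^ 3 * (p.2.1 - 1) + p.1.rep 1 ^ 3 * (p.2.2 - 2)
        + 2 * p.1.rep 0 ^ 2 * p.1.rep 1 = 0}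

/-!
Over a point `[v]` of `ℙ¹` the fibre of `T` is the affine line `a(v) · x = c(v)` in `ℂ²`, with
`a(v) = (v₀³, v₁³) ≠ 0`. Moving each point of `ℂ²` along the Hermitian normal `conj a(v)` towards
this line is a straight-line homotopy from the identity to a retraction onto `T` that fixes `T`.
Replacing `v` by `λ v` multiplies `a` and `c` by the same factor `λ³`, which leaves the homotopy
unchanged, so it descends to `ℙ¹ × ℂ²`; it is continuous there because
`ℂ² \ {0} → ℙ¹` is an open quotient map.
-/

namespace ContinuousMap.HomotopyEquiv

variable {Y : Type*} [TopologicalSpace Y] {s : Set Y}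

def ofHomotopicRetraction (f : C(Y, Y)) (hf : ∀ y, f y ∈ s) (hfs : ∀ y ∈ s, f y = y)
    (hid : (ContinuousMap.id Y).Homotopic f) : s ≃ₕ Y where
  toFun := ⟨Subtype.val, continuous_subtype_val⟩
  invFun := ⟨fun y => ⟨f y, hf y⟩, f.continuous.subtype_mk hf⟩
  left_inv := by
    convert ContinuousMap.Homotopic.refl _
    ext w
    exact (hfs w w.2).symm
  right_inv := hid.symm

end ContinuousMap.HomotopyEquiv

namespace Projectivization

variable {K V : Type*} [DivisionRing K] [AddCommGroup V] [Module K V] [TopologicalSpace V]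
  [ContinuousConstSMul K V]

theorem isOpenQuotientMap_mk' : IsOpenQuotientMap (mk' K : {v : V // v ≠ 0} → ℙ K V) := by
  refine ⟨Quotient.mk''_surjective, continuous_quotient_mk', fun U hU => ?_⟩
  have hsat : mk' K ⁻¹' (mk' K '' U) = ⋃ c : Kˣ, (c • ·) ⁻¹' U := by
    ext v
    simp only [Set.mem_preimage, Set.mem_image, Set.mem_iUnion, mk'_eq_mk, mk_eq_mk_iff]
    constructor
    · rintro ⟨w, hw, c, hc⟩
      have hcw : c • v = w := Subtype.ext hc
      exact ⟨c, hcw ▸ hw⟩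
    · rintro ⟨c, hc⟩
      exact ⟨_, hc, c, rfl⟩
  change IsOpen (mk' K ⁻¹' (mk' K '' U))
  rw [hsat]
  exact isOpen_iUnion fun c =>
    hU.preimage ((continuous_subtype_val.const_smul (c : K)).subtype_mk _)

theorem continuous_rep_of_smul_invariant {X Z : Type*} [TopologicalSpace X] [TopologicalSpace Z]
    {g : V → X → Z} (hg : ∀ (c : K) (v : V) (x : X), c ≠ 0 → g (c • v) x = g v x)
    (hcont : Continuous fun vx : {v : V // v ≠ 0} × X => g vx.1 vx.2) :
    Continuous fun px : ℙ K V × X => g px.1.rep px.2 := by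
  rw [← (isOpenQuotientMap_mk'.prodMap .id).continuous_comp_iff]
  convert hcont using 2 with ⟨v, x⟩
  obtain ⟨c, hc⟩ := (mk_eq_mk_iff K _ _ _ v.2).mp (mk_rep (mk' K v))
  simp only [Function.comp_apply, Prod.map_apply, id_eq]
  rw [← hc]
  exact hg c v x c.ne_zero

end Projectivization

open Complex ComplexConjugate

noncomputable section

/-- At `t = 1` this is the orthogonal projection onto the line `a₁ x₁ + a₂ x₂ = c`, whose
Hermitian normal is `(conj a₁, conj a₂)`. -/
def lineRetraction (a : ℂ × ℂ) (c t : ℂ) (x : ℂ × ℂ) : ℂ × ℂ :=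
  x - (t * (a.1 * x.1 + a.2 * x.2 - c) / ↑(normSq a.1 + normSq a.2)) • (conj a.1, conj a.2)

theorem normSq_add_normSq_ne_zero {a : ℂ × ℂ} (ha : a ≠ 0) : normSq a.1 + normSq a.2 ≠ 0 := by
  rw [Ne, add_eq_zero_iff_of_nonneg (normSq_nonneg _) (normSq_nonneg _), normSq_eq_zero,
    normSq_eq_zero]
  exact fun h => ha (Prod.ext h.1 h.2)

@[simp]
theorem lineRetraction_zero (a : ℂ × ℂ) (c : ℂ) (x : ℂ × ℂ) : lineRetraction a c 0 x = x := by
  simp [lineRetraction]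

theorem lineRetraction_of_eq {a x : ℂ × ℂ} {c : ℂ} (h : a.1 * x.1 + a.2 * x.2 = c) (t : ℂ) :
    lineRetraction a c t x = x := by
  simp [lineRetraction, h]

theorem lineRetraction_one_eq {a : ℂ × ℂ} (ha : a ≠ 0) (c : ℂ) (x : ℂ × ℂ) :
    a.1 * (lineRetraction a c 1 x).1 + a.2 * (lineRetraction a c 1 x).2 = c := by
  have hN : (↑(normSq a.1 + normSq a.2) : ℂ) ≠ 0 :=
    ofReal_ne_zero.mpr (normSq_add_normSq_ne_zero ha)
  simp only [lineRetraction, one_mul, Prod.fst_sub, Prod.snd_sub, Prod.smul_fst, Prod.smul_snd,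
    smul_eq_mul]
  field_simp
  push_cast
  rw [← mul_conj, ← mul_conj]
  ring

theorem lineRetraction_smul {μ : ℂ} (hμ : μ ≠ 0) (a : ℂ × ℂ) (c t : ℂ) (x : ℂ × ℂ) :
    lineRetraction (μ • a) (μ * c) t x = lineRetraction a c t x := by
  have hconj : conj μ ≠ 0 := (map_ne_zero _).mpr hμ
  have key : t * (μ * a.1 * x.1 + μ * a.2 * x.2 - μ * c) /
      ↑(normSq (μ * a.1) + normSq (μ * a.2)) * conj μ =
      t * (a.1 * x.1 + a.2 * x.2 - c) / ↑(normSq a.1 + normSq a.2) := by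
    rw [normSq_mul, normSq_mul]
    push_cast
    rw [← mul_conj]
    field_simp
  ext <;> simp only [lineRetraction, Prod.fst_sub, Prod.snd_sub, Prod.smul_fst, Prod.smul_snd,
    smul_eq_mul, map_mul, ← key] <;> ring

theorem Continuous.lineRetraction {X : Type*} [TopologicalSpace X] {a x : X → ℂ × ℂ}
    {c t : X → ℂ} (ha : Continuous a) (hc : Continuous c) (ht : Continuous t)
    (hx : Continuous x) (ha₀ : ∀ z, a z ≠ 0) :
    Continuous fun z => _root_.lineRetraction (a z) (c z) (t z) (x z) := by
  have hcoeff : Continuous fun z =>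
      t z * ((a z).1 * (x z).1 + (a z).2 * (x z).2 - c z) / ↑(normSq (a z).1 + normSq (a z).2) :=
    Continuous.div (by fun_prop) (by fun_prop)
      fun z => ofReal_ne_zero.mpr (normSq_add_normSq_ne_zero (ha₀ z))
  have hnormal : Continuous fun z => (conj (a z).1, conj (a z).2) :=
    (continuous_conj.comp (continuous_fst.comp ha)).prodMk
      (continuous_conj.comp (continuous_snd.comp ha))
  exact hx.sub (hcoeff.fun_smul hnormal)

def exampleC_coeffs (v : Fin 2 → ℂ) : ℂ × ℂ := (v 0 ^ 3, v 1 ^ 3)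

def exampleC_rhs (v : Fin 2 → ℂ) : ℂ := v 0 ^ 3 + 2 * v 1 ^ 3 - 2 * v 0 ^ 2 * v 1

theorem mem_exampleC_T_iff {p : ℙ ℂ (Fin 2 → ℂ) × (ℂ × ℂ)} :
    p ∈ exampleC_T ↔ (exampleC_coeffs p.1.rep).1 * p.2.1 + (exampleC_coeffs p.1.rep).2 * p.2.2 =
      exampleC_rhs p.1.rep := by
  rw [← sub_eq_zero]
  exact Eq.congr_left (by simp only [exampleC_coeffs, exampleC_rhs]; ring)

theorem exampleC_coeffs_ne_zero {v : Fin 2 → ℂ} (hv : v ≠ 0) : exampleC_coeffs v ≠ 0 := by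
  intro h
  simp only [exampleC_coeffs, Prod.mk_eq_zero, pow_eq_zero_iff three_ne_zero] at h
  exact hv (funext fun i => by fin_cases i <;> simp [h.1, h.2])

theorem exampleC_coeffs_smul (c : ℂ) (v : Fin 2 → ℂ) :
    exampleC_coeffs (c • v) = c ^ 3 • exampleC_coeffs v := by
  simp only [exampleC_coeffs, Pi.smul_apply, smul_eq_mul, Prod.smul_mk]
  ring_nf

theorem exampleC_rhs_smul (c : ℂ) (v : Fin 2 → ℂ) :
    exampleC_rhs (c • v) = c ^ 3 * exampleC_rhs v := by
  simp only [exampleC_rhs, Pi.smul_apply, smul_eq_mul]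
  ring

theorem continuous_exampleC_coeffs : Continuous exampleC_coeffs := by
  unfold exampleC_coeffs
  fun_prop

theorem continuous_exampleC_rhs : Continuous exampleC_rhs := by
  unfold exampleC_rhs
  fun_prop

def exampleC_deformation :
    C(ℂ × (ℙ ℂ (Fin 2 → ℂ) × (ℂ × ℂ)), ℙ ℂ (Fin 2 → ℂ) × (ℂ × ℂ)) where
  toFun ty := (ty.2.1,
    lineRetraction (exampleC_coeffs ty.2.1.rep) (exampleC_rhs ty.2.1.rep) ty.1 ty.2.2)
  continuous_toFun := by
    have hdesc := continuous_rep_of_smul_invariant (K := ℂ) (X := ℂ × (ℂ × ℂ))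
      (g := fun v tx => lineRetraction (exampleC_coeffs v) (exampleC_rhs v) tx.1 tx.2)
      (fun c v tx hc => by
        simp only [exampleC_coeffs_smul, exampleC_rhs_smul, lineRetraction_smul (pow_ne_zero 3 hc)])
      (Continuous.lineRetraction (continuous_exampleC_coeffs.comp continuous_fst.subtype_val)
        (continuous_exampleC_rhs.comp continuous_fst.subtype_val) (by fun_prop) (by fun_prop)
        fun vx => exampleC_coeffs_ne_zero vx.1.2)
    exact continuous_snd.fst.prodMk
      (hdesc.comp (continuous_snd.fst.prodMk (continuous_fst.prodMk continuous_snd.snd)))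

theorem exampleC_deformation_one_mem (y : ℙ ℂ (Fin 2 → ℂ) × (ℂ × ℂ)) :
    exampleC_deformation (1, y) ∈ exampleC_T :=
  mem_exampleC_T_iff.mpr (lineRetraction_one_eq (exampleC_coeffs_ne_zero y.1.rep_nonzero) _ _)

theorem exampleC_deformation_of_mem {y : ℙ ℂ (Fin 2 → ℂ) × (ℂ × ℂ)} (hy : y ∈ exampleC_T)
    (t : ℂ) : exampleC_deformation (t, y) = y :=
  Prod.ext rfl (lineRetraction_of_eq (mem_exampleC_T_iff.mp hy) t)

def exampleC_homotopy :
    (ContinuousMap.id (ℙ ℂ (Fin 2 → ℂ) × (ℂ × ℂ))).Homotopy (exampleC_deformation.curry 1) where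
  toFun p := exampleC_deformation (((p.1 : ℝ) : ℂ), p.2)
  continuous_toFun := by fun_prop
  map_zero_left _ := Prod.ext rfl (by simp [exampleC_deformation])
  map_one_left _ := by simp

end

/-- The inclusion `T ↪ ℙ¹(ℂ) × ℂ²` is a homotopy equivalence. -/
theorem exampleC_inclusion_homotopy_equiv :
    ∃ e : ContinuousMap.HomotopyEquiv ↥exampleC_T (ℙ ℂ (Fin 2 → ℂ) × (ℂ × ℂ)),
      ∀ w : ↥exampleC_T, e w = (w : ℙ ℂ (Fin 2 → ℂ) × (ℂ × ℂ)) :=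
  ⟨.ofHomotopicRetraction (exampleC_deformation.curry 1) exampleC_deformation_one_mem
    (fun _ hy => exampleC_deformation_of_mem hy 1) ⟨exampleC_homotopy⟩, fun _ => rfl⟩
end

section
/- For every real ε with 0 < ε < 1, the iterated circle integral ∮_{|x₂|=ε} ( ∮_{|y₁|=ε} (x₂² + 1)/(x₂ · y₁ · (y₁ + 1)) dy₁ ) dx₂, where both circles are centred at 0 and traversed once counterclockwise, equals (2πi)² = −4π²; in particular it is nonzero. -/
open Real Complex

/-!
Both integrals are Cauchy integral formulas at the centre `0`. For fixed `x₂`, the function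
`y₁ ↦ (x₂² + 1) / (x₂ (y₁ + 1))` is holomorphic on the closed disc of radius `ε < 1`, so the inner
integral is `2πi (x₂² + 1) / x₂`; the outer integral is then `2πi` times the value of
`x₂ ↦ 2πi (x₂² + 1)` at `0`.
-/

open Metric

theorem circleIntegral_div_sub_center {f : ℂ → ℂ} {c : ℂ} {R : ℝ} (hR : 0 < R)
    (hf : DifferentiableOn ℂ f (closedBall c R)) :
    (∮ z in C(c, R), f z / (z - c)) = 2 * π * I * f c := by
  simpa only [smul_eq_mul, div_eq_inv_mul] using
    hf.circleIntegral_sub_inv_smul (mem_ball_self hR)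

theorem differentiableOn_const_div_add_one {R : ℝ} (hR : R < 1) (a : ℂ) :
    DifferentiableOn ℂ (fun z : ℂ => a / (z + 1)) (closedBall 0 R) := by
  refine (differentiableOn_const a).div (differentiableOn_id.add_const 1) fun z hz hz1 => ?_
  have hz_norm : ‖z‖ = 1 := by simp [eq_neg_of_add_eq_zero_left hz1]
  rw [mem_closedBall_zero_iff] at hz
  linarith

-- No `x ≠ 0` is needed: at `x = 0` both sides vanish since `a / 0 = 0`.
theorem circleIntegral_div_mul_mul_add_one {R : ℝ} (hR0 : 0 < R) (hR1 : R < 1) (a x : ℂ) :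
    (∮ y in C(0, R), a / (x * y * (y + 1))) = 2 * π * I * (a / x) := by
  have h := circleIntegral_div_sub_center hR0 (differentiableOn_const_div_add_one hR1 (a / x))
  simp only [sub_zero, zero_add, div_one] at h
  rw [← h]
  congr 1 with y
  rw [div_div, div_div]
  ring

/-- Example D: for `0 < ε < 1`, the iterated circle integral
`∮_{|x₂|=ε} ∮_{|y₁|=ε} (x₂²+1)/(x₂·y₁·(y₁+1)) dy₁ dx₂` equals `(2πi)² = −4π² ≠ 0`. -/
theorem exampleD_residue_integral_ne_zero (ε : ℝ) (hε0 : 0 < ε) (hε1 : ε < 1) :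
    (∮ x₂ in C(0, ε), ∮ y₁ in C(0, ε), (x₂ ^ 2 + 1) / (x₂ * y₁ * (y₁ + 1))) =
        (2 * (π : ℂ) * I) ^ 2 ∧
      (2 * (π : ℂ) * I) ^ 2 = -4 * (π : ℂ) ^ 2 ∧
      (∮ x₂ in C(0, ε), ∮ y₁ in C(0, ε), (x₂ ^ 2 + 1) / (x₂ * y₁ * (y₁ + 1))) ≠ 0 := by
  have hvalue : (∮ x₂ in C(0, ε), ∮ y₁ in C(0, ε), (x₂ ^ 2 + 1) / (x₂ * y₁ * (y₁ + 1))) =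
      (2 * (π : ℂ) * I) ^ 2 := by
    simp_rw [circleIntegral_div_mul_mul_add_one hε0 hε1]
    have h := circleIntegral_div_sub_center (c := 0) hε0
      (f := fun x : ℂ => 2 * π * I * (x ^ 2 + 1)) (by fun_prop)
    simp only [sub_zero] at h
    calc (∮ x in C(0, ε), 2 * π * I * ((x ^ 2 + 1) / x))
        = ∮ x in C(0, ε), 2 * π * I * (x ^ 2 + 1) / x := by simp only [mul_div_assoc]
      _ = (2 * π * I) ^ 2 := by rw [h]; ring
  have hsquare : (2 * (π : ℂ) * I) ^ 2 = -4 * (π : ℂ) ^ 2 := by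
    linear_combination (4 * (π : ℂ) ^ 2) * I_sq
  refine ⟨hvalue, hsquare, ?_⟩
  rw [hvalue]
  simp [pi_ne_zero, I_ne_zero]
end

section
/- For all real r₁ > 0 and r₂ > 0, the iterated circle integral ∮_{|v|=r₂} ( ∮_{|u|=r₁} ((v − u)³ + 1)/(u·v) du ) dv, where both circles are centred at 0 and traversed once counterclockwise, equals (2πi)² = −4π²; in particular it is nonzero. -/
/-!
By Cauchy's theorem the entire part of an integrand contributes nothing to a circle integral
around `c`, and `(z - c)⁻¹` contributes `2πi`. For fixed `v ≠ 0` the inner integrand is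
`-3v + 3u - u²/v + ((v³ + 1)/v) u⁻¹`, so the inner integral is `2πi (v² + v⁻¹)`, and the
outer integral of that is `(2πi)²`.
-/

open Real Complex Metric Set

theorem circleIntegral_add_const_mul_sub_inv {f : ℂ → ℂ} (hf : Differentiable ℂ f) (c : ℂ)
    {R : ℝ} (hR : 0 < R) (d : ℂ) :
    (∮ z in C(c, R), (f z + d * (z - c)⁻¹)) = 2 * π * I * d := by
  have hinv : CircleIntegrable (fun z => d * (z - c)⁻¹) c R :=
    (circleIntegrable_sub_inv_iff.2 (Or.inr (by simp [abs_of_pos hR, hR.ne]))).const_mul d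
  rw [circleIntegral.integral_add (hf.continuous.continuousOn.circleIntegrable hR.le) hinv,
    hf.diffContOnCl.circleIntegral_eq_zero hR.le, circleIntegral.integral_const_mul,
    circleIntegral.integral_sub_center_inv c hR.ne']
  ring

theorem circleIntegral_exampleE_inner {r : ℝ} (hr : 0 < r) {v : ℂ} (hv : v ≠ 0) :
    (∮ u in C(0, r), ((v - u) ^ 3 + 1) / (u * v)) = 2 * π * I * ((v ^ 3 + 1) / v) := by
  have hsplit : EqOn (fun u => ((v - u) ^ 3 + 1) / (u * v))
      (fun u => (-3 * v + 3 * u - u ^ 2 / v) + (v ^ 3 + 1) / v * (u - 0)⁻¹) (sphere 0 r) := by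
    intro u hu
    have hu0 : u ≠ 0 := ne_zero_of_mem_sphere hr.ne' ⟨u, hu⟩
    field_simp
    ring
  rw [circleIntegral.integral_congr hr.le hsplit]
  exact circleIntegral_add_const_mul_sub_inv (by fun_prop) 0 hr _

/-- Example E: for all `r₁, r₂ > 0`, the iterated circle integral
`∮_{|v|=r₂} ∮_{|u|=r₁} ((v−u)³+1)/(uv) du dv` equals `(2πi)² = −4π² ≠ 0`. -/
theorem exampleE_residue_integral_ne_zero (r₁ r₂ : ℝ) (h₁ : 0 < r₁) (h₂ : 0 < r₂) :
    (∮ v in C(0, r₂), ∮ u in C(0, r₁), ((v - u) ^ 3 + 1) / (u * v)) =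
        (2 * (π : ℂ) * I) ^ 2 ∧
      (2 * (π : ℂ) * I) ^ 2 = -4 * (π : ℂ) ^ 2 ∧
      (∮ v in C(0, r₂), ∮ u in C(0, r₁), ((v - u) ^ 3 + 1) / (u * v)) ≠ 0 := by
  have hinner : EqOn (fun v => ∮ u in C(0, r₁), ((v - u) ^ 3 + 1) / (u * v))
      (fun v => 2 * π * I * v ^ 2 + 2 * π * I * (v - 0)⁻¹) (sphere 0 r₂) := by
    intro v hv
    have hv0 : v ≠ 0 := ne_zero_of_mem_sphere h₂.ne' ⟨v, hv⟩
    simp only [circleIntegral_exampleE_inner h₁ hv0]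
    field_simp
    ring
  have hvalue : (∮ v in C(0, r₂), ∮ u in C(0, r₁), ((v - u) ^ 3 + 1) / (u * v)) =
      (2 * (π : ℂ) * I) ^ 2 := by
    rw [circleIntegral.integral_congr h₂.le hinner,
      circleIntegral_add_const_mul_sub_inv (by fun_prop) 0 h₂]
    ring
  have hsq : (2 * (π : ℂ) * I) ^ 2 = -4 * (π : ℂ) ^ 2 := by
    rw [mul_pow, I_sq]
    ring
  refine ⟨hvalue, hsq, ?_⟩
  rw [hvalue]
  exact pow_ne_zero 2 <|
    mul_ne_zero (mul_ne_zero two_ne_zero (ofReal_ne_zero.2 pi_ne_zero)) I_ne_zero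
end
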